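/- arXiv:2601.11112 — 5 statements merged into one kernel-verified Lean document; each statement's English description precedes it below -/
import Mathlib

section
/- Let X be a T1, coherent, well-filtered topological space. If X is locally compact, then X is a KC-space. -/
/-- A subset of a topological space is *saturated* if it equals the intersection of all
open sets containing it. -/
def IsSaturatedSet {Y : Type*} [TopologicalSpace Y] (A : Set Y) : Prop :=
  A = ⋂₀ {U : Set Y | IsOpen U ∧ A ⊆ U}

/-- A space is a *strong R-space* if for every family `𝒦` of compact saturated sets and
every open `U` with `⋂₀ 𝒦 ⊆ U`, some finite subfamily `ℱ ⊆ 𝒦` satisfies `⋂₀ ℱ ⊆ U`. -/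
def IsStrongRSpace (Y : Type*) [TopologicalSpace Y] : Prop :=
  ∀ 𝒦 : Set (Set Y), (∀ K ∈ 𝒦, IsCompact K ∧ IsSaturatedSet K) →
    ∀ U : Set Y, IsOpen U → ⋂₀ 𝒦 ⊆ U → ∃ ℱ ⊆ 𝒦, ℱ.Finite ∧ ⋂₀ ℱ ⊆ U

/-- A space is *coherent* if the intersection of any two compact saturated sets is compact. -/
def IsCoherentSpace (Y : Type*) [TopologicalSpace Y] : Prop :=
  ∀ K₁ K₂ : Set Y, IsCompact K₁ → IsSaturatedSet K₁ → IsCompact K₂ → IsSaturatedSet K₂ →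
    IsCompact (K₁ ∩ K₂)

/-- A space is *well-filtered* if for every (nonempty) filtered family `𝒞` of compact
saturated sets and every open `U` with `⋂₀ 𝒞 ⊆ U`, there exists `K ∈ 𝒞` with `K ⊆ U`. -/
def IsWellFilteredSpace (Y : Type*) [TopologicalSpace Y] : Prop :=
  ∀ 𝒞 : Set (Set Y), 𝒞.Nonempty → (∀ K ∈ 𝒞, IsCompact K ∧ IsSaturatedSet K) →
    (∀ A ∈ 𝒞, ∀ B ∈ 𝒞, ∃ C ∈ 𝒞, C ⊆ A ∩ B) →
    ∀ U : Set Y, IsOpen U → ⋂₀ 𝒞 ⊆ U → ∃ K ∈ 𝒞, K ⊆ U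

/-- Upper closure of a set with respect to the specialization order
(`a ≤ y` iff `a ∈ closure {y}`). -/
def specUpperClosure {Y : Type*} [TopologicalSpace Y] (A : Set Y) : Set Y :=
  {y | ∃ a ∈ A, a ∈ closure {y}}

/-- A space is an *R-space* if whenever an intersection of upper closures of finite sets
is contained in an open set `U`, a finite subintersection is already contained in `U`. -/
def IsRSpace (Y : Type*) [TopologicalSpace Y] : Prop :=
  ∀ (ι : Type*) (F : ι → Set Y), (∀ i, (F i).Finite) → ∀ U : Set Y, IsOpen U →
    (⋂ i, specUpperClosure (F i)) ⊆ U →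
    ∃ A : Set ι, A.Finite ∧ (⋂ i ∈ A, specUpperClosure (F i)) ⊆ U

/-- The Smyth powerspace: the set of nonempty compact saturated subsets. -/
def SmythPow (Y : Type*) [TopologicalSpace Y] : Type _ :=
  {K : Set Y // K.Nonempty ∧ IsCompact K ∧ IsSaturatedSet K}

/-- The topology of the Smyth powerspace, generated by `□U = {K | K ⊆ U}` for `U` open. -/
instance SmythPow.instTopologicalSpace {Y : Type*} [TopologicalSpace Y] :
    TopologicalSpace (SmythPow Y) :=
  TopologicalSpace.generateFrom
    {S | ∃ U : Set Y, IsOpen U ∧ S = {K : SmythPow Y | K.1 ⊆ U}}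

/-- A space is *co-Noetherian* if every closed set is the closure of a finite set. -/
def IsCoNoetherian (Y : Type*) [TopologicalSpace Y] : Prop :=
  ∀ C : Set Y, IsClosed C → ∃ F : Set Y, F.Finite ∧ C = closure F

/-- The patch topology: generated by the open sets together with complements of
compact saturated sets. -/
def patchTop (Y : Type*) [TopologicalSpace Y] : TopologicalSpace Y :=
  TopologicalSpace.generateFrom
    ({U : Set Y | IsOpen U} ∪ {S : Set Y | ∃ K : Set Y, IsCompact K ∧ IsSaturatedSet K ∧ S = Kᶜ})

/-- The strong (Skula) topology: generated by the open sets together with the closed sets. -/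
def skulaTop (Y : Type*) [TopologicalSpace Y] : TopologicalSpace Y :=
  TopologicalSpace.generateFrom ({U : Set Y | IsOpen U} ∪ {C : Set Y | IsClosed C})

/-- A space is *locally hypercompact* if every point has, inside each open neighbourhood `U`,
a finite set `F ⊆ U` with the point in the interior of the upper closure of `F`. -/
def IsLocallyHypercompact (Y : Type*) [TopologicalSpace Y] : Prop :=
  ∀ x : Y, ∀ U : Set Y, IsOpen U → x ∈ U →
    ∃ F : Set Y, F.Finite ∧ F ⊆ U ∧ x ∈ interior (specUpperClosure F)

/-- `U ≪ V` for open sets: every open cover of `V` has a finite subfamily covering `U`. -/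
def wayBelowOpen {Y : Type*} [TopologicalSpace Y] (U V : Set Y) : Prop :=
  ∀ 𝒞 : Set (Set Y), (∀ W ∈ 𝒞, IsOpen W) → V ⊆ ⋃₀ 𝒞 → ∃ 𝒟 ⊆ 𝒞, 𝒟.Finite ∧ U ⊆ ⋃₀ 𝒟

/-- A space is *open well-filtered* if for every (nonempty) `≪`-filtered family `ℱ` of open
sets and every open `U` with `⋂₀ ℱ ⊆ U`, there is `V ∈ ℱ` with `V ⊆ U`. -/
def IsOpenWellFiltered (Y : Type*) [TopologicalSpace Y] : Prop :=
  ∀ ℱ : Set (Set Y), ℱ.Nonempty → (∀ W ∈ ℱ, IsOpen W) →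
    (∀ U₁ ∈ ℱ, ∀ U₂ ∈ ℱ, ∃ U₃ ∈ ℱ, wayBelowOpen U₃ U₁ ∧ wayBelowOpen U₃ U₂) →
    ∀ U : Set Y, IsOpen U → ⋂₀ ℱ ⊆ U → ∃ V ∈ ℱ, V ⊆ U

/-- Lower closure of a set in a preorder. -/
def lowerCloSet {L : Type*} [Preorder L] (A : Set L) : Set L := {x | ∃ a ∈ A, x ≤ a}

/-- `F` is a *cover* of the antichain `C`: `F` is a finite antichain with `C ⊆ ↓F`, and
for every finite `G` with `C ⊆ ↓G` one has `F ⊆ ↓G`. -/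
def IsCoverOf {L : Type*} [Preorder L] (F C : Set L) : Prop :=
  F.Finite ∧ IsAntichain (· ≤ ·) F ∧ C ⊆ lowerCloSet F ∧
    ∀ G : Set L, G.Finite → C ⊆ lowerCloSet G → F ⊆ lowerCloSet G

/-- Specialization order: `x ≤ y` iff `x ∈ closure {y}`. -/
def specLE {Y : Type*} [TopologicalSpace Y] (x y : Y) : Prop := x ∈ closure {y}

/-- Lower closure with respect to the specialization order. -/
def specLowerClosure {Y : Type*} [TopologicalSpace Y] (A : Set Y) : Set Y :=
  {x | ∃ a ∈ A, specLE x a}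


/-!
For `x ∉ K`, the traces `Q ∩ K` of the compact neighbourhoods `Q` of `x` form a filtered family
of compact (by coherence) saturated (by T1) sets whose intersection is empty, since in a locally
compact T1 space the compact neighbourhoods of `x` intersect in `{x}`. Well-filteredness then
yields a compact neighbourhood of `x` disjoint from `K`, so `Kᶜ` is open.
-/

open Set Filter Topology

section

variable {X : Type*} [TopologicalSpace X]

theorem isSaturatedSet_of_t1Space [T1Space X] (A : Set X) : IsSaturatedSet A := by
  refine subset_antisymm (fun a ha U hU => hU.2 ha) fun y hy => ?_
  by_contra hyA
  exact hy {y}ᶜ ⟨isOpen_compl_singleton, fun a ha hay => hyA (hay ▸ ha)⟩ rfl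

theorem IsCoherentSpace.isCompact_inter [T1Space X] (hcoh : IsCoherentSpace X) {K₁ K₂ : Set X}
    (hK₁ : IsCompact K₁) (hK₂ : IsCompact K₂) : IsCompact (K₁ ∩ K₂) :=
  hcoh K₁ K₂ hK₁ (isSaturatedSet_of_t1Space K₁) hK₂ (isSaturatedSet_of_t1Space K₂)

def compactNhdsTrace (x : X) (K : Set X) : Set (Set X) :=
  (· ∩ K) '' {Q | Q ∈ 𝓝 x ∧ IsCompact Q}

theorem compactNhdsTrace_nonempty [LocallyCompactSpace X] (x : X) (K : Set X) :
    (compactNhdsTrace x K).Nonempty := by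
  obtain ⟨Q, hQx, -, hQ⟩ := local_compact_nhds (x := x) univ_mem
  exact ⟨Q ∩ K, Q, ⟨hQx, hQ⟩, rfl⟩

theorem isCompact_of_mem_compactNhdsTrace [T1Space X] (hcoh : IsCoherentSpace X) {x : X}
    {K S : Set X} (hK : IsCompact K) (hS : S ∈ compactNhdsTrace x K) : IsCompact S := by
  obtain ⟨Q, ⟨-, hQ⟩, rfl⟩ := hS
  exact hcoh.isCompact_inter hQ hK

theorem exists_mem_compactNhdsTrace_subset_inter [T1Space X] (hcoh : IsCoherentSpace X)
    {x : X} {K A B : Set X} (hA : A ∈ compactNhdsTrace x K) (hB : B ∈ compactNhdsTrace x K) :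
    ∃ C ∈ compactNhdsTrace x K, C ⊆ A ∩ B := by
  obtain ⟨Q₁, ⟨hQ₁x, hQ₁⟩, rfl⟩ := hA
  obtain ⟨Q₂, ⟨hQ₂x, hQ₂⟩, rfl⟩ := hB
  exact ⟨Q₁ ∩ Q₂ ∩ K, ⟨Q₁ ∩ Q₂, ⟨inter_mem hQ₁x hQ₂x, hcoh.isCompact_inter hQ₁ hQ₂⟩, rfl⟩,
    fun z hz => ⟨⟨hz.1.1, hz.2⟩, hz.1.2, hz.2⟩⟩

theorem sInter_compactNhdsTrace_eq_empty [T1Space X] [LocallyCompactSpace X] {x : X}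
    {K : Set X} (hx : x ∉ K) : ⋂₀ compactNhdsTrace x K = ∅ := by
  refine eq_empty_of_forall_notMem fun y hy => ?_
  have hyQ : ∀ Q ∈ 𝓝 x, IsCompact Q → y ∈ Q ∩ K := fun Q hQx hQ => hy _ ⟨Q, ⟨hQx, hQ⟩, rfl⟩
  have hyK : y ∈ K := by
    obtain ⟨Q, hQx, -, hQ⟩ := local_compact_nhds (x := x) univ_mem
    exact (hyQ Q hQx hQ).2
  have hxy : x ∈ ({y}ᶜ : Set X) := fun hxy => hx (hxy ▸ hyK)
  obtain ⟨Q, hQx, hQy, hQ⟩ := local_compact_nhds (isOpen_compl_singleton.mem_nhds hxy)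
  exact hQy (hyQ Q hQx hQ).1 rfl

end

theorem stmt2 {X : Type*} [TopologicalSpace X] [T1Space X] [LocallyCompactSpace X]
    (hcoh : IsCoherentSpace X) (hwf : IsWellFilteredSpace X) :
    ∀ K : Set X, IsCompact K → IsClosed K := by
  intro K hK
  refine isOpen_compl_iff.mp (isOpen_iff_mem_nhds.mpr fun x hx => ?_)
  obtain ⟨_, ⟨Q, ⟨hQx, -⟩, rfl⟩, hQK⟩ := hwf (compactNhdsTrace x K)
    (compactNhdsTrace_nonempty x K)
    (fun S hS => ⟨isCompact_of_mem_compactNhdsTrace hcoh hK hS, isSaturatedSet_of_t1Space S⟩)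
    (fun A hA B hB => exists_mem_compactNhdsTrace_subset_inter hcoh hA hB)
    ∅ isOpen_empty (sInter_compactNhdsTrace_eq_empty hx).subset
  exact mem_of_superset hQx fun z hz hzK => hQK ⟨hz, hzK⟩
end

section
/- Let X be a locally compact, coherent, well-filtered T0 topological space. Then the Smyth powerspace P_S(X) is a strong R-space. -/
/-!
A locally compact well-filtered space is sober, and so is its Smyth powerspace: the generic
point of an irreducible closed `𝒜 ⊆ P_S(X)` is the intersection of all opens containing a member
of `𝒜`, which is compact by the Hofmann–Mislove argument. Sober spaces are well-filtered.
Given compact saturated sets `𝒦` of `P_S(X)` with `⋂ 𝒦 ⊆ 𝒰`, consider the saturations `↑T` of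
finite sets `T ⊆ P_S(X)` that contain some finite subintersection of `𝒦`. Local compactness of `X`
lets them approximate every member of `𝒦` from above, so their intersection lies in `⋂ 𝒦`;
coherence of `X` makes them a filtered family. Well-filteredness of `P_S(X)` then puts one of
them, and with it a finite subintersection of `𝒦`, inside `𝒰`.
-/

open Set TopologicalSpace

section Saturated

variable {Y : Type*} [TopologicalSpace Y] {A B : Set Y}

theorem isSaturatedSet_iff_nhdsKer_eq : IsSaturatedSet A ↔ nhdsKer A = A := by
  rw [IsSaturatedSet, nhdsKer_def, eq_comm]

theorem IsSaturatedSet.nhdsKer_eq (h : IsSaturatedSet A) : nhdsKer A = A :=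
  isSaturatedSet_iff_nhdsKer_eq.1 h

theorem isSaturatedSet_nhdsKer (A : Set Y) : IsSaturatedSet (nhdsKer A) :=
  isSaturatedSet_iff_nhdsKer_eq.2 (nhdsKer_nhdsKer A)

theorem IsSaturatedSet.inter (hA : IsSaturatedSet A) (hB : IsSaturatedSet B) :
    IsSaturatedSet (A ∩ B) :=
  isSaturatedSet_iff_nhdsKer_eq.2 <| (nhdsKer_inter_subset.trans
    (inter_subset_inter hA.nhdsKer_eq.subset hB.nhdsKer_eq.subset)).antisymm subset_nhdsKer

theorem isSaturatedSet_iInter {ι : Sort*} {A : ι → Set Y} (h : ∀ i, IsSaturatedSet (A i)) :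
    IsSaturatedSet (⋂ i, A i) :=
  isSaturatedSet_iff_nhdsKer_eq.2 <| (nhdsKer_iInter_subset.trans
    (iInter_mono fun i => (h i).nhdsKer_eq.subset)).antisymm subset_nhdsKer

theorem exists_isCompact_isSaturatedSet_subset_interior [LocallyCompactSpace Y] {K V : Set Y}
    (hK : IsCompact K) (hV : IsOpen V) (hKV : K ⊆ V) :
    ∃ M, IsCompact M ∧ IsSaturatedSet M ∧ K ⊆ interior M ∧ M ⊆ V := by
  obtain ⟨M, hM, hKM, hMV⟩ := exists_compact_between hK hV hKV
  exact ⟨nhdsKer M, hM.nhdsKer, isSaturatedSet_nhdsKer M,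
    hKM.trans (interior_mono subset_nhdsKer), nhdsKer_minimal hMV hV⟩

end Saturated

section QuasiSober

variable {Y : Type*} [TopologicalSpace Y] {ι : Type*} {K : ι → Set Y}

/-- The open sets containing some `K i` form a filter. -/
def IsOpenFiltered (K : ι → Set Y) : Prop :=
  ∀ V W, IsOpen V → IsOpen W → (∃ i, K i ⊆ V) → (∃ i, K i ⊆ W) → ∃ i, K i ⊆ V ∩ W

variable [QuasiSober Y]

theorem QuasiSober.exists_subset_of_iInter_nhdsKer_subset [Nonempty ι]
    (hK : ∀ i, IsCompact (K i)) (hdir : IsOpenFiltered K)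
    {U : Set Y} (hU : IsOpen U) (hKU : ⋂ i, nhdsKer (K i) ⊆ U) : ∃ i, K i ⊆ U := by
  by_contra! hUK
  set S : Set (Set Y) := {W | IsOpen W ∧ ∀ i, ¬K i ⊆ W}
  have hchain : ∀ c ⊆ S, IsChain (· ⊆ ·) c → c.Nonempty → ∃ W ∈ S, ∀ W' ∈ c, W' ⊆ W := by
    rintro c hcS hc ⟨W₀, hW₀⟩
    refine ⟨⋃₀ c, ⟨isOpen_sUnion fun W hW => (hcS hW).1, fun i hi => ?_⟩,
      fun W => subset_sUnion_of_mem⟩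
    have : Nonempty c := ⟨⟨W₀, hW₀⟩⟩
    obtain ⟨⟨W, hW⟩, hiW⟩ := (hK i).elim_directed_cover (fun W : c => W.1)
      (fun W => (hcS W.2).1) (by rwa [← sUnion_eq_iUnion]) hc.directedOn.directed_val
    exact (hcS hW).2 i hiW
  obtain ⟨m, hUm, hm⟩ := zorn_subset_nonempty S hchain U ⟨hU, hUK⟩
  -- The complement of a maximal such `m` is irreducible; its generic point lies in every
  -- `nhdsKer (K i)`, hence in `U ⊆ m`.
  have hext : ∀ w, IsOpen w → (mᶜ ∩ w).Nonempty → ∃ i, K i ⊆ m ∪ w := by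
    rintro w hw ⟨z, hzm, hzw⟩
    by_contra! h
    exact hzm (hm.2 ⟨hm.1.1.union hw, h⟩ subset_union_left (subset_union_right hzw))
  have hirr : IsIrreducible mᶜ := by
    refine ⟨?_, fun u v hu hv hmu hmv => ?_⟩
    · obtain ⟨x, -, hx⟩ := not_subset.1 (hm.1.2 (Classical.arbitrary ι))
      exact ⟨x, hx⟩
    by_contra! huv
    obtain ⟨i, hi⟩ := hdir _ _ (hm.1.1.union hu) (hm.1.1.union hv) (hext u hu hmu)
      (hext v hv hmv)
    refine hm.1.2 i (hi.trans ?_)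
    rw [← union_inter_distrib_left]
    exact union_subset subset_rfl fun z hz => by_contra fun hzm => huv.subset ⟨hzm, hz⟩
  obtain ⟨x, hx⟩ := QuasiSober.sober hirr hm.1.1.isClosed_compl
  refine hx.mem (hUm (hKU (mem_iInter.2 fun i => mem_nhdsKer.2 fun V hV hKV => ?_)))
  obtain ⟨k, hk, hkm⟩ := not_subset.1 (hm.1.2 i)
  exact (hx.specializes hkm).mem_open hV (hKV hk)

theorem QuasiSober.isCompact_iInter_nhdsKer [Nonempty ι] (hK : ∀ i, IsCompact (K i))
    (hdir : IsOpenFiltered K) : IsCompact (⋂ i, nhdsKer (K i)) := by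
  refine isCompact_of_finite_subcover fun U hUo hcov => ?_
  obtain ⟨i, hi⟩ := exists_subset_of_iInter_nhdsKer_subset hK hdir (isOpen_iUnion hUo) hcov
  obtain ⟨t, ht⟩ := (hK i).elim_finite_subcover U hUo hi
  exact ⟨t, (iInter_subset _ i).trans (nhdsKer_minimal ht (isOpen_biUnion fun j _ => hUo j))⟩

theorem QuasiSober.isWellFilteredSpace : IsWellFilteredSpace Y := by
  intro 𝒞 ⟨C₀, hC₀⟩ h𝒞 hfil U hU hsub
  have : Nonempty 𝒞 := ⟨⟨C₀, hC₀⟩⟩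
  have hdir : IsOpenFiltered ((↑) : 𝒞 → Set Y) := by
    rintro V W - - ⟨⟨A, hA⟩, hAV⟩ ⟨⟨B, hB⟩, hBW⟩
    obtain ⟨C, hC, hCAB⟩ := hfil A hA B hB
    exact ⟨⟨C, hC⟩, hCAB.trans (inter_subset_inter hAV hBW)⟩
  have hinter : ⋂ C : 𝒞, nhdsKer C.1 = ⋂₀ 𝒞 := by
    rw [sInter_eq_iInter]
    exact iInter_congr fun C => (h𝒞 C C.2).2.nhdsKer_eq
  obtain ⟨⟨C, hC⟩, hCU⟩ := exists_subset_of_iInter_nhdsKer_subset (K := ((↑) : 𝒞 → Set Y))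
    (fun C => (h𝒞 C C.2).1) hdir hU (hinter ▸ hsub)
  exact ⟨C, hC, hCU⟩

end QuasiSober

section LocallyCompact

variable {X : Type*} [TopologicalSpace X] [LocallyCompactSpace X]

theorem quasiSober_of_isWellFilteredSpace (hwf : IsWellFilteredSpace X) : QuasiSober X := by
  refine ⟨fun {A} hA hAc => ?_⟩
  set 𝒞 := {Q : Set X | (IsCompact Q ∧ IsSaturatedSet Q) ∧ (A ∩ interior Q).Nonempty}
  have hsmall : ∀ a ∈ A, ∀ V, IsOpen V → a ∈ V → ∃ Q ∈ 𝒞, Q ⊆ V ∧ a ∈ interior Q := by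
    intro a ha V hV haV
    obtain ⟨Q, hQ, hQs, haQ, hQV⟩ := exists_isCompact_isSaturatedSet_subset_interior
      isCompact_singleton hV (singleton_subset_iff.2 haV)
    exact ⟨Q, ⟨⟨hQ, hQs⟩, a, ha, haQ rfl⟩, hQV, haQ rfl⟩
  have hfil : ∀ P ∈ 𝒞, ∀ Q ∈ 𝒞, ∃ R ∈ 𝒞, R ⊆ P ∩ Q := by
    rintro P ⟨-, hP⟩ Q ⟨-, hQ⟩
    obtain ⟨a, ha, haP, haQ⟩ := hA.2 _ _ isOpen_interior isOpen_interior hP hQ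
    obtain ⟨R, hR, hRPQ, -⟩ := hsmall a ha _ (isOpen_interior.inter isOpen_interior) ⟨haP, haQ⟩
    exact ⟨R, hR, hRPQ.trans (inter_subset_inter interior_subset interior_subset)⟩
  obtain ⟨x, hx𝒞, hxA⟩ : (⋂₀ 𝒞 ∩ A).Nonempty := by
    by_contra! h
    obtain ⟨a, ha⟩ := hA.nonempty
    obtain ⟨Q₀, hQ₀, -⟩ := hsmall a ha univ isOpen_univ (mem_univ a)
    obtain ⟨Q, ⟨-, b, hbA, hbQ⟩, hQA⟩ := hwf 𝒞 ⟨Q₀, hQ₀⟩ (fun Q hQ => hQ.1) hfil Aᶜ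
      hAc.isOpen_compl fun y hy hyA => h.subset ⟨hy, hyA⟩
    exact hQA (interior_subset hbQ) hbA
  refine ⟨x, isGenericPoint_iff_specializes.2 fun a => ⟨fun h => h.mem_closed hAc hxA, fun ha => ?_⟩⟩
  refine specializes_iff_forall_open.2 fun V hV haV => ?_
  obtain ⟨Q, hQ, hQV, -⟩ := hsmall a ha V hV haV
  exact hQV (hx𝒞 Q hQ)

end LocallyCompact

section StrongR

variable {Y : Type*} [TopologicalSpace Y]

theorem IsCompact.exists_finite_nhdsKer_subset {Q 𝒰 : Set Y}
    (h : ∀ x ∈ 𝒰, ∃ y, x ∈ interior (nhdsKer {y}) ∧ nhdsKer {y} ⊆ 𝒰)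
    (hQ : IsCompact Q) (hQ𝒰 : Q ⊆ 𝒰) :
    ∃ T : Set Y, T.Finite ∧ Q ⊆ nhdsKer T ∧ nhdsKer T ⊆ 𝒰 := by
  choose! y hy using h
  obtain ⟨t, htQ, hQt⟩ := hQ.elim_nhds_subcover (fun x => nhdsKer {y x})
    fun x hx => mem_interior_iff_mem_nhds.1 (hy x (hQ𝒰 hx)).1
  have ht : nhdsKer (y '' t) = ⋃ x ∈ t, nhdsKer {y x} := by
    rw [image_eq_iUnion, nhdsKer_biUnion]
    rfl
  refine ⟨y '' t, t.finite_toSet.image y, ht ▸ hQt, ht ▸ iUnion₂_subset fun x hx => ?_⟩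
  exact (hy x (hQ𝒰 (htQ x hx))).2

theorem isStrongRSpace_of_isWellFilteredSpace (hwf : IsWellFilteredSpace Y)
    (hsurr : ∀ Q 𝒰 : Set Y, IsCompact Q → IsOpen 𝒰 → Q ⊆ 𝒰 →
      ∃ T : Set Y, T.Finite ∧ Q ⊆ nhdsKer T ∧ nhdsKer T ⊆ 𝒰)
    (hinter : ∀ T₁ T₂ : Set Y, T₁.Finite → T₂.Finite →
      ∃ T : Set Y, T.Finite ∧ nhdsKer T = nhdsKer T₁ ∩ nhdsKer T₂) :
    IsStrongRSpace Y := by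
  intro 𝒦 h𝒦 𝒰 h𝒰 h𝒦𝒰
  rcases 𝒦.eq_empty_or_nonempty with rfl | ⟨Q₀, hQ₀⟩
  · exact ⟨∅, subset_rfl, finite_empty, h𝒦𝒰⟩
  set 𝒟 : Set (Set Y) :=
    {D | (∃ T : Set Y, T.Finite ∧ nhdsKer T = D) ∧ ∃ ℱ ⊆ 𝒦, ℱ.Finite ∧ ⋂₀ ℱ ⊆ D}
  have hsurr𝒟 : ∀ Q ∈ 𝒦, ∀ 𝒱, IsOpen 𝒱 → Q ⊆ 𝒱 → ∃ D ∈ 𝒟, D ⊆ 𝒱 := by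
    intro Q hQ 𝒱 h𝒱 hQ𝒱
    obtain ⟨T, hT, hQT, hT𝒱⟩ := hsurr Q 𝒱 (h𝒦 Q hQ).1 h𝒱 hQ𝒱
    exact ⟨nhdsKer T, ⟨⟨T, hT, rfl⟩, {Q}, singleton_subset_iff.2 hQ, finite_singleton Q,
      by rwa [sInter_singleton]⟩, hT𝒱⟩
  have h𝒟𝒦 : ⋂₀ 𝒟 ⊆ ⋂₀ 𝒦 := by
    refine fun L hL => mem_sInter.2 fun Q hQ => ?_
    rw [← (h𝒦 Q hQ).2.nhdsKer_eq, mem_nhdsKer]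
    intro 𝒱 h𝒱 hQ𝒱
    obtain ⟨D, hD, hD𝒱⟩ := hsurr𝒟 Q hQ 𝒱 h𝒱 hQ𝒱
    exact hD𝒱 (hL D hD)
  have hne : 𝒟.Nonempty := by
    obtain ⟨D, hD, -⟩ := hsurr𝒟 Q₀ hQ₀ univ isOpen_univ (subset_univ _)
    exact ⟨D, hD⟩
  have hcpt : ∀ D ∈ 𝒟, IsCompact D ∧ IsSaturatedSet D := by
    rintro _ ⟨⟨T, hT, rfl⟩, -⟩
    exact ⟨hT.isCompact.nhdsKer, isSaturatedSet_nhdsKer T⟩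
  have hfil : ∀ D₁ ∈ 𝒟, ∀ D₂ ∈ 𝒟, ∃ D ∈ 𝒟, D ⊆ D₁ ∩ D₂ := by
    rintro _ ⟨⟨T₁, hT₁, rfl⟩, ℱ₁, hℱ₁𝒦, hℱ₁, hℱ₁D⟩ _ ⟨⟨T₂, hT₂, rfl⟩, ℱ₂, hℱ₂𝒦, hℱ₂, hℱ₂D⟩
    obtain ⟨T, hT, hTeq⟩ := hinter T₁ T₂ hT₁ hT₂
    refine ⟨nhdsKer T, ⟨⟨T, hT, rfl⟩, ℱ₁ ∪ ℱ₂, union_subset hℱ₁𝒦 hℱ₂𝒦, hℱ₁.union hℱ₂, ?_⟩,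
      hTeq.subset⟩
    rw [sInter_union, hTeq]
    exact inter_subset_inter hℱ₁D hℱ₂D
  obtain ⟨D, ⟨-, ℱ, hℱ𝒦, hℱ, hℱD⟩, hD𝒰⟩ := hwf 𝒟 hne hcpt hfil 𝒰 h𝒰 (h𝒟𝒦.trans h𝒦𝒰)
  exact ⟨ℱ, hℱ𝒦, hℱ, hℱD.trans hD𝒰⟩

end StrongR

namespace SmythPow

variable {X : Type*} [TopologicalSpace X]

def mk (K : Set X) (hne : K.Nonempty) (hK : IsCompact K) (hKs : IsSaturatedSet K) :
    SmythPow X :=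
  ⟨K, hne, hK, hKs⟩

def box (V : Set X) : Set (SmythPow X) := {K | K.1 ⊆ V}

theorem box_mono {V W : Set X} (h : V ⊆ W) : box V ⊆ box W :=
  fun _ hK => hK.trans h

theorem isTopologicalBasis_box :
    IsTopologicalBasis {𝒱 | ∃ V : Set X, IsOpen V ∧ 𝒱 = box V} where
  exists_subset_inter := by
    rintro _ ⟨V, hV, rfl⟩ _ ⟨W, hW, rfl⟩ K hK
    exact ⟨box (V ∩ W), ⟨V ∩ W, hV.inter hW, rfl⟩, subset_inter hK.1 hK.2,
      subset_inter (box_mono inter_subset_left) (box_mono inter_subset_right)⟩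
  sUnion_eq := sUnion_eq_univ_iff.2 fun _ => ⟨box univ, ⟨univ, isOpen_univ, rfl⟩, subset_univ _⟩
  eq_generateFrom := rfl

theorem isOpen_box {V : Set X} (hV : IsOpen V) : IsOpen (box V) :=
  isTopologicalBasis_box.isOpen ⟨V, hV, rfl⟩

theorem exists_box_subset {𝒰 : Set (SmythPow X)} (h𝒰 : IsOpen 𝒰) {K : SmythPow X}
    (hK : K ∈ 𝒰) : ∃ V, IsOpen V ∧ K.1 ⊆ V ∧ box V ⊆ 𝒰 := by
  obtain ⟨_, ⟨V, hV, rfl⟩, hKV, hV𝒰⟩ := isTopologicalBasis_box.exists_subset_of_mem_open hK h𝒰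
  exact ⟨V, hV, hKV, hV𝒰⟩

theorem specializes_iff {K L : SmythPow X} : K ⤳ L ↔ K.1 ⊆ L.1 := by
  rw [specializes_iff_forall_open]
  refine ⟨fun h => ?_, fun hKL 𝒰 h𝒰 hL => ?_⟩
  · exact (subset_nhdsKer_iff.2 fun V hV hLV => h _ (isOpen_box hV) hLV).trans
      L.2.2.2.nhdsKer_eq.subset
  · obtain ⟨V, hV, hLV, hV𝒰⟩ := exists_box_subset h𝒰 hL
    exact hV𝒰 (hKL.trans hLV)

theorem nhdsKer_eq (T : Set (SmythPow X)) : nhdsKer T = {K | ∃ L ∈ T, K.1 ⊆ L.1} := by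
  ext K
  simp only [mem_nhdsKer_iff_specializes, specializes_iff]
  rfl

theorem exists_finite_nhdsKer_eq_inter (hcoh : IsCoherentSpace X) {T₁ T₂ : Set (SmythPow X)}
    (h₁ : T₁.Finite) (h₂ : T₂.Finite) :
    ∃ T : Set (SmythPow X), T.Finite ∧ nhdsKer T = nhdsKer T₁ ∩ nhdsKer T₂ := by
  refine ⟨(fun K : SmythPow X => K.1) ⁻¹' image2 (fun K L => K.1 ∩ L.1) T₁ T₂,
    (h₁.image2 _ h₂).preimage Subtype.val_injective.injOn, ?_⟩
  ext M
  simp only [nhdsKer_eq, mem_inter_iff, mem_preimage, mem_image2]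
  constructor
  · rintro ⟨N, ⟨K, hK, L, hL, hKL⟩, hMN⟩
    rw [← hKL] at hMN
    exact ⟨⟨K, hK, hMN.trans inter_subset_left⟩, ⟨L, hL, hMN.trans inter_subset_right⟩⟩
  · rintro ⟨⟨K, hK, hMK⟩, ⟨L, hL, hML⟩⟩
    exact ⟨⟨K.1 ∩ L.1, M.2.1.mono (subset_inter hMK hML),
      hcoh _ _ K.2.2.1 K.2.2.2 L.2.2.1 L.2.2.2, K.2.2.2.inter L.2.2.2⟩,
      ⟨K, hK, L, hL, rfl⟩, subset_inter hMK hML⟩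

theorem exists_mem_interior_nhdsKer_singleton_subset [LocallyCompactSpace X]
    {𝒰 : Set (SmythPow X)} (h𝒰 : IsOpen 𝒰) {L : SmythPow X} (hL : L ∈ 𝒰) :
    ∃ M : SmythPow X, L ∈ interior (nhdsKer {M}) ∧ nhdsKer {M} ⊆ 𝒰 := by
  obtain ⟨V, hV, hLV, hV𝒰⟩ := exists_box_subset h𝒰 hL
  obtain ⟨M, hM, hMs, hLM, hMV⟩ :=
    exists_isCompact_isSaturatedSet_subset_interior L.2.2.1 hV hLV
  set N := mk M (L.2.1.mono (hLM.trans interior_subset)) hM hMs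
  have hN : nhdsKer {N} = box M := by
    simp only [nhdsKer_eq, mem_singleton_iff, exists_eq_left]
    rfl
  refine ⟨N, ?_, ?_⟩ <;> rw [hN]
  · exact interior_maximal (box_mono interior_subset) (isOpen_box isOpen_interior) hLM
  · exact (box_mono hMV).trans hV𝒰

theorem quasiSober [LocallyCompactSpace X] (hwf : IsWellFilteredSpace X) :
    QuasiSober (SmythPow X) := by
  have := quasiSober_of_isWellFilteredSpace hwf
  refine ⟨fun {𝒜} h𝒜 h𝒜c => ?_⟩
  have : Nonempty 𝒜 := h𝒜.nonempty.to_subtype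
  have hK : ∀ L : 𝒜, IsCompact L.1.1 := fun L => L.1.2.2.1
  have hdir : IsOpenFiltered fun L : 𝒜 => L.1.1 := by
    rintro V W hV hW ⟨L, hLV⟩ ⟨M, hMW⟩
    obtain ⟨N, hN, hNV, hNW⟩ :=
      h𝒜.2 _ _ (isOpen_box hV) (isOpen_box hW) ⟨L, L.2, hLV⟩ ⟨M, M.2, hMW⟩
    exact ⟨⟨N, hN⟩, subset_inter hNV hNW⟩
  have hne : (⋂ L : 𝒜, nhdsKer L.1.1).Nonempty := by
    by_contra! h
    obtain ⟨L, hL⟩ :=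
      QuasiSober.exists_subset_of_iInter_nhdsKer_subset hK hdir isOpen_empty h.subset
    exact L.1.2.1.ne_empty (subset_empty_iff.1 hL)
  obtain ⟨P₀, hP₀⟩ : ∃ P : SmythPow X, P.1 = ⋂ L : 𝒜, nhdsKer L.1.1 :=
    ⟨mk _ hne (QuasiSober.isCompact_iInter_nhdsKer hK hdir)
      (isSaturatedSet_iInter fun L => isSaturatedSet_nhdsKer _), rfl⟩
  have hP₀𝒜 : P₀ ∈ 𝒜 := by
    by_contra h
    obtain ⟨V, hV, hP₀V, hV𝒜⟩ := exists_box_subset h𝒜c.isOpen_compl h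
    obtain ⟨L, hLV⟩ :=
      QuasiSober.exists_subset_of_iInter_nhdsKer_subset hK hdir hV (hP₀ ▸ hP₀V)
    exact hV𝒜 hLV L.2
  refine ⟨P₀, isGenericPoint_iff_specializes.2 fun L =>
    ⟨fun h => h.mem_closed h𝒜c hP₀𝒜, fun hL => ?_⟩⟩
  rw [specializes_iff, hP₀]
  exact (iInter_subset (fun M : 𝒜 => nhdsKer M.1.1) ⟨L, hL⟩).trans L.2.2.2.nhdsKer_eq.subset

end SmythPow

theorem stmt6_general {X : Type*} [TopologicalSpace X] [LocallyCompactSpace X]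
    (hcoh : IsCoherentSpace X) (hwf : IsWellFilteredSpace X) :
    IsStrongRSpace (SmythPow X) := by
  have := SmythPow.quasiSober hwf
  refine isStrongRSpace_of_isWellFilteredSpace QuasiSober.isWellFilteredSpace
    (fun Q 𝒰 hQ h𝒰 hQ𝒰 => hQ.exists_finite_nhdsKer_subset
      (fun L hL => SmythPow.exists_mem_interior_nhdsKer_singleton_subset h𝒰 hL) hQ𝒰)
    fun T₁ T₂ => SmythPow.exists_finite_nhdsKer_eq_inter hcoh

theorem stmt6 {X : Type*} [TopologicalSpace X] [T0Space X] [LocallyCompactSpace X]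
    (hcoh : IsCoherentSpace X) (hwf : IsWellFilteredSpace X) :
    IsStrongRSpace (SmythPow X) :=
  stmt6_general hcoh hwf
end

section
/- Let (X, τ) be a T0 topological space and τ^p its patch topology. Then (X, τ^p) is compact if and only if (X, τ) is a compact, coherent strong R-space. -/
/-!
Every `τ`-open set and every complement of a compact saturated set is patch-open, so patch
compactness gives compactness of `X`, patch-closedness (hence compactness) of `K₁ ∩ K₂`, and, by
the finite intersection property of the patch-closed sets `Uᶜ` and `K ∈ 𝒦`, the strong R-property.
Conversely, by Alexander's subbasis theorem it suffices to refine a cover of `X` by open sets `O`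
and complements `Kᶜ`: the intersection of the `K` lies in the union of the `O`, so by the strong
R-property finitely many `K` already do, and their intersection is compact by coherence, hence
covered by finitely many `O`.
-/

open Set TopologicalSpace Topology

section Patch

variable {X : Type*} [TopologicalSpace X]

theorem IsSaturatedSet.sInter {𝒦 : Set (Set X)} (h𝒦 : ∀ K ∈ 𝒦, IsSaturatedSet K) :
    IsSaturatedSet (⋂₀ 𝒦) := by
  refine Subset.antisymm (fun _ hx _ hU => hU.2 hx) (subset_sInter fun K hK => ?_)
  rw [h𝒦 K hK]
  exact sInter_subset_sInter fun U hU => ⟨hU.1, (sInter_subset_of_mem hK).trans hU.2⟩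

theorem IsCoherentSpace.isCompact_sInter [CompactSpace X] (hX : IsCoherentSpace X)
    {ℱ : Set (Set X)} (hfin : ℱ.Finite) (hℱ : ∀ K ∈ ℱ, IsCompact K ∧ IsSaturatedSet K) :
    IsCompact (⋂₀ ℱ) := by
  induction ℱ, hfin using Set.Finite.induction_on with
  | empty => simpa using isCompact_univ
  | @insert K ℱ _ _ ih =>
    have hK := hℱ K (mem_insert K ℱ)
    have hrest : ∀ L ∈ ℱ, IsCompact L ∧ IsSaturatedSet L :=
      fun L hL => hℱ L (mem_insert_of_mem K hL)
    rw [sInter_insert]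
    exact hX _ _ hK.1 hK.2 (ih hrest) (IsSaturatedSet.sInter fun L hL => (hrest L hL).2)

theorem isOpen_patchTop {U : Set X} (hU : IsOpen U) : IsOpen[patchTop X] U :=
  isOpen_generateFrom_of_mem (Or.inl hU)

theorem isClosed_patchTop {K : Set X} (hK : IsCompact K) (hKs : IsSaturatedSet K) :
    IsClosed[patchTop X] K :=
  @IsClosed.mk X (patchTop X) K (isOpen_generateFrom_of_mem (Or.inr ⟨K, hK, hKs, rfl⟩))

theorem patchTop_le : patchTop X ≤ ‹TopologicalSpace X› :=
  fun _ => isOpen_patchTop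

theorem isCompact_of_isClosed_patchTop (hp : @CompactSpace X (patchTop X)) {K : Set X}
    (hK : IsClosed[patchTop X] K) : IsCompact K := by
  simpa using @IsCompact.image X X (patchTop X) _ _ id
    (@IsClosed.isCompact X (patchTop X) _ hp hK) (continuous_id_of_le patchTop_le)

theorem compactSpace_of_compactSpace_patchTop (hp : @CompactSpace X (patchTop X)) :
    CompactSpace X :=
  ⟨isCompact_of_isClosed_patchTop hp (@isClosed_univ X (patchTop X))⟩

theorem isCoherentSpace_of_compactSpace_patchTop (hp : @CompactSpace X (patchTop X)) :
    IsCoherentSpace X :=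
  fun _ _ hc₁ hs₁ hc₂ hs₂ => isCompact_of_isClosed_patchTop hp
    (@IsClosed.inter X _ _ (patchTop X) (isClosed_patchTop hc₁ hs₁) (isClosed_patchTop hc₂ hs₂))

theorem isStrongRSpace_of_compactSpace_patchTop (hp : @CompactSpace X (patchTop X)) :
    IsStrongRSpace X := by
  intro 𝒦 h𝒦 U hU hsub
  have hUc := @IsClosed.isCompact X (patchTop X) _ hp
    (@IsOpen.isClosed_compl X (patchTop X) _ (isOpen_patchTop hU))
  obtain ⟨u, hu⟩ := @IsCompact.elim_finite_subfamily_closed X (patchTop X) _ 𝒦 hUc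
    (fun K => K) (fun K => isClosed_patchTop (h𝒦 K K.2).1 (h𝒦 K K.2).2)
    (by rw [← sInter_eq_iInter, inter_comm, ← sdiff_eq, sdiff_eq_empty]; exact hsub)
  refine ⟨(↑) '' (u : Set 𝒦), by simp, u.finite_toSet.image _, ?_⟩
  rw [sInter_image]
  rwa [inter_comm, ← sdiff_eq, sdiff_eq_empty] at hu

theorem compactSpace_patchTop [CompactSpace X] (hcoh : IsCoherentSpace X)
    (hR : IsStrongRSpace X) : @CompactSpace X (patchTop X) := by
  refine @compactSpace_generateFrom X (patchTop X) _ rfl fun 𝒞 h𝒞 hcov => ?_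
  set 𝒪 : Set (Set X) := {S ∈ 𝒞 | IsOpen S}
  set 𝒦 : Set (Set X) := {K | IsCompact K ∧ IsSaturatedSet K ∧ Kᶜ ∈ 𝒞}
  have h𝒦𝒪 : ⋂₀ 𝒦 ⊆ ⋃₀ 𝒪 := by
    intro x hx
    obtain ⟨S, hS, hxS⟩ := mem_sUnion.mp (hcov.ge (mem_univ x))
    rcases h𝒞 hS with hSopen | ⟨K, hK, hKs, rfl⟩
    · exact ⟨S, ⟨hS, hSopen⟩, hxS⟩
    · exact absurd (hx K ⟨hK, hKs, hS⟩) hxS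
  obtain ⟨ℱ, hℱ𝒦, hℱ, hℱ𝒪⟩ :=
    hR 𝒦 (fun K hK => ⟨hK.1, hK.2.1⟩) _ (isOpen_sUnion fun S hS => hS.2) h𝒦𝒪
  have hℱc : IsCompact (⋂₀ ℱ) :=
    hcoh.isCompact_sInter hℱ fun K hK => ⟨(hℱ𝒦 hK).1, (hℱ𝒦 hK).2.1⟩
  obtain ⟨𝒪', h𝒪'𝒪, h𝒪', hℱ𝒪'⟩ :=
    hℱc.elim_finite_subcover_image (fun S hS => hS.2) (sUnion_eq_biUnion ▸ hℱ𝒪)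
  refine ⟨𝒪' ∪ compl '' ℱ, ?_, h𝒪'.union (hℱ.image _), eq_univ_of_forall fun x => ?_⟩
  · rintro S (hS | ⟨K, hK, rfl⟩)
    exacts [(h𝒪'𝒪 hS).1, (hℱ𝒦 hK).2.2]
  · by_cases hx : x ∈ ⋂₀ ℱ
    · obtain ⟨S, hS, hxS⟩ := mem_iUnion₂.mp (hℱ𝒪' hx)
      exact ⟨S, Or.inl hS, hxS⟩
    · obtain ⟨K, hK, hxK⟩ := not_forall₂.mp hx
      exact ⟨Kᶜ, Or.inr ⟨K, hK, rfl⟩, hxK⟩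

end Patch

theorem stmt7_general {X : Type*} [TopologicalSpace X] :
    @CompactSpace X (patchTop X) ↔
      (CompactSpace X ∧ IsCoherentSpace X ∧ IsStrongRSpace X) :=
  ⟨fun hp => ⟨compactSpace_of_compactSpace_patchTop hp,
      isCoherentSpace_of_compactSpace_patchTop hp, isStrongRSpace_of_compactSpace_patchTop hp⟩,
    fun ⟨_, hcoh, hR⟩ => compactSpace_patchTop hcoh hR⟩

theorem stmt7 {X : Type*} [TopologicalSpace X] [T0Space X] :
    @CompactSpace X (patchTop X) ↔
      (CompactSpace X ∧ IsCoherentSpace X ∧ IsStrongRSpace X) :=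
  stmt7_general
end

section
/- Every T0 co-Noetherian topological space is a strong R-space. -/
/-! Write `Uᶜ` as the closure of a finite set `F`, and for each `x ∈ F` pick a member `K x` of
the family missing `x`. A point `y` outside `U` lies in the closure of some `x ∈ F`, i.e.
`x ⤳ y`; as `K x` is saturated, `y ∈ K x` would force `x ∈ K x`. Hence the finitely many `K x`
already have intersection inside `U`. -/

section

open Set

variable {X : Type*} [TopologicalSpace X]

theorem IsSaturatedSet.nhdsKer_eq_s9 {K : Set X} (hK : IsSaturatedSet K) : nhdsKer K = K :=
  (nhdsKer_def K).trans hK.symm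

theorem IsSaturatedSet.mem_of_specializes {K : Set X} (hK : IsSaturatedSet K) {x y : X}
    (hxy : x ⤳ y) (hy : y ∈ K) : x ∈ K :=
  hK.nhdsKer_eq_s9 ▸ mem_nhdsKer_iff_specializes.2 ⟨y, hy, hxy⟩

theorem Set.Finite.exists_specializes_of_mem_closure {F : Set X} (hF : F.Finite) {y : X}
    (hy : y ∈ closure F) : ∃ x ∈ F, x ⤳ y := by
  rw [← biUnion_of_singleton F, hF.closure_biUnion] at hy
  simpa [specializes_iff_mem_closure] using hy

theorem IsCoNoetherian.exists_finite_sInter_subset (hX : IsCoNoetherian X) {𝒦 : Set (Set X)}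
    (h𝒦 : ∀ K ∈ 𝒦, IsSaturatedSet K) {U : Set X} (hU : IsOpen U) (hsub : ⋂₀ 𝒦 ⊆ U) :
    ∃ ℱ ⊆ 𝒦, ℱ.Finite ∧ ⋂₀ ℱ ⊆ U := by
  obtain ⟨F, hF, hUF⟩ := hX Uᶜ hU.isClosed_compl
  have hmiss : ∀ x ∈ F, ∃ K ∈ 𝒦, x ∉ K := fun x hx => by
    have hxU : x ∉ U := (hUF ▸ subset_closure hx : x ∈ Uᶜ)
    simpa [mem_sInter] using mt (@hsub x) hxU
  choose! K hK𝒦 hxK using hmiss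
  refine ⟨K '' F, image_subset_iff.2 hK𝒦, hF.image K, fun y hy => by_contra fun hyU => ?_⟩
  obtain ⟨x, hx, hxy⟩ := hF.exists_specializes_of_mem_closure (hUF ▸ hyU : y ∈ closure F)
  exact hxK x hx <| (h𝒦 _ (hK𝒦 x hx)).mem_of_specializes hxy (hy _ (mem_image_of_mem K hx))

end

theorem stmt9_general {X : Type*} [TopologicalSpace X]
    (h : IsCoNoetherian X) : IsStrongRSpace X :=
  fun _ h𝒦 _ hU hsub => h.exists_finite_sInter_subset (fun K hK => (h𝒦 K hK).2) hU hsub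

theorem stmt9 {X : Type*} [TopologicalSpace X] [T0Space X]
    (h : IsCoNoetherian X) : IsStrongRSpace X :=
  stmt9_general h
end

section
/- Let L be a controllable dcpo. Then L endowed with the upper topology υ(L) is a co-Noetherian space. -/
/-!
A closed set `C` of the upper topology is an intersection of sets `↓G` with `G` finite, hence
closed under directed suprema; in a dcpo, Zorn's lemma then puts every element of `C` below a
maximal one. The maximal elements of `C` form an antichain; its cover `F` lies in every `↓G ⊇ C`,
so `F ⊆ C`, while `C ⊆ ↓F ⊆ closure F`. Hence `C = closure F`.
-/

open Set Topology

lemma DirSupClosed.exists_le_maximal {L : Type*} [Preorder L]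
    (hdcpo : ∀ D : Set L, D.Nonempty → DirectedOn (· ≤ ·) D → ∃ a : L, IsLUB D a)
    {C : Set L} (hC : DirSupClosed C) {x : L} (hx : x ∈ C) :
    ∃ m, x ≤ m ∧ Maximal (· ∈ C) m :=
  zorn_le_nonempty₀ C (fun c hcC hc y hy ↦
    have ⟨a, ha⟩ := hdcpo c ⟨y, hy⟩ hc.directedOn
    ⟨a, hC hcC ⟨y, hy⟩ hc.directedOn ha, fun _ hz ↦ ha.1 hz⟩) x hx

lemma Topology.scottHausdorff_le_upper {α : Type*} [Preorder α] :
    scottHausdorff α univ ≤ upper α := by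
  refine le_generateFrom fun _ ⟨a, ha⟩ ↦ ?_
  rw [← ha, IsScottHausdorff.isOpen_iff_dirSupInacc (t := scottHausdorff α univ),
    dirSupInacc_compl]
  exact dirSupClosed_Iic a

namespace Topology.IsUpper

variable {α : Type*} [Preorder α] [TopologicalSpace α] [IsUpper α] {s : Set α}

lemma dirSupClosed_of_isClosed (hs : IsClosed s) : DirSupClosed s := by
  rw [← IsScottHausdorff.isClosed_iff_dirSupClosed (t := scottHausdorff α univ)]
  rw [topology_eq α] at hs
  exact hs.mono scottHausdorff_le_upper

lemma lowerClosure_subset_closure : ↑(lowerClosure s) ⊆ closure s := by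
  rintro x ⟨a, ha, hxa⟩
  exact closure_mono (singleton_subset_iff.2 ha) (closure_singleton a ▸ hxa)

lemma mem_of_isClosed_of_forall_finite (hs : IsClosed s) {x : α}
    (h : ∀ G : Set α, G.Finite → s ⊆ lowerClosure G → x ∈ lowerClosure G) : x ∈ s := by
  by_contra hx
  obtain ⟨_, ⟨G, hG, rfl⟩, hxG, hGs⟩ :=
    IsUpper.isTopologicalBasis.exists_subset_of_mem_open hx hs.isOpen_compl
  exact hxG (h G hG fun y hy ↦ by_contra fun hyG ↦ hGs hyG hy)

end Topology.IsUpper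

theorem stmt18 {L : Type*} [PartialOrder L]
    (hdcpo : ∀ D : Set L, D.Nonempty → DirectedOn (· ≤ ·) D → ∃ a : L, IsLUB D a)
    (hctrl : ∀ C : Set L, IsAntichain (· ≤ ·) C → ∃ F : Set L, IsCoverOf F C) :
    @IsCoNoetherian L (Topology.upper L) := by
  let _ : TopologicalSpace L := upper L
  have : IsUpper L := ⟨rfl⟩
  intro C hC
  -- `lowerCloSet` and `lowerClosure` agree definitionally.
  obtain ⟨F, hF, -, hMF, hFmin⟩ := hctrl _ (setOfPred_maximal_antichain (· ∈ C))
  refine ⟨F, hF, subset_antisymm (fun x hx ↦ ?_) (closure_minimal (fun f hf ↦ ?_) hC)⟩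
  · obtain ⟨m, hxm, hm⟩ := (IsUpper.dirSupClosed_of_isClosed hC).exists_le_maximal hdcpo hx
    obtain ⟨f, hf, hmf⟩ := hMF hm
    exact IsUpper.lowerClosure_subset_closure ⟨f, hf, hxm.trans hmf⟩
  · exact IsUpper.mem_of_isClosed_of_forall_finite hC fun G hG hCG ↦
      hFmin G hG (fun m hm ↦ hCG hm.1) hf
end
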